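/- arXiv:2206.14836 — 7 statements merged into one kernel-verified Lean document; each statement's English description precedes it below -/
import Mathlib

section
/- (Desnanot–Jacobi identity) Let B be an n×n matrix over a commutative ring, and let i₁ < i₂ be row indices and j₁ < j₂ be column indices in [n]. Then B_{[n]∖{i₁,i₂},[n]∖{j₁,j₂}}·det(B) = B_{i₁,j₁}·B_{i₂,j₂} − B_{i₁,j₂}·B_{i₂,j₁}, where B_{i,j} denotes the minor obtained by deleting row i and column j, and B_{I,J} denotes the minor with rows indexed by I and columns indexed by J. -/
/-!
Let `N` be the identity matrix with columns `j₁, j₂` replaced by columns `i₁, i₂` of `adj B`.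
Then `B * N` is `B` with those columns replaced by `det B • e_{i₁}` and `det B • e_{i₂}`, so two
Laplace expansions give `det B * det N = ± (det B)² * B_{[n]∖{i₁,i₂},[n]∖{j₁,j₂}}`, while
`det N` is a `2 × 2` minor of `adj B`, i.e. up to sign the right-hand side of the identity.
Cancelling `det B` is legitimate for the generic matrix over `ℤ[x_{ij}]`, whose determinant is
a non-zero-divisor, and the resulting polynomial identity specializes to every `B`.
-/

open Matrix

namespace Matrix

variable {R : Type*} [CommRing R]

theorem det_updateCol_single {n : ℕ} (M : Matrix (Fin (n + 1)) (Fin (n + 1)) R)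
    (i j : Fin (n + 1)) (c : R) :
    (M.updateCol j (Pi.single i c)).det
      = (-1) ^ (i + j : ℕ) * c * (M.submatrix i.succAbove j.succAbove).det := by
  rw [det_succ_column _ j, Fintype.sum_eq_single i fun k hk => by simp [Pi.single_eq_of_ne hk]]
  simp

theorem det_one_updateCol_updateCol {m : Type*} [Fintype m] [DecidableEq m] {j₁ j₂ : m}
    (h : j₁ ≠ j₂) (u v : m → R) :
    (((1 : Matrix m m R).updateCol j₁ u).updateCol j₂ v).det = u j₁ * v j₂ - u j₂ * v j₁ := by
  -- `N = 1 + A * C` with `A, C` of rank two, and `det (1 + A * C) = det (1 + C * A)` is `2 × 2`.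
  let A : Matrix m (Fin 2) R :=
    of fun a => ![u a - (1 : Matrix m m R) a j₁, v a - (1 : Matrix m m R) a j₂]
  let C : Matrix (Fin 2) m R := of ![Pi.single j₁ 1, Pi.single j₂ 1]
  have hAC : ((1 : Matrix m m R).updateCol j₁ u).updateCol j₂ v = 1 + A * C := by
    ext a b
    by_cases hb₂ : b = j₂ <;> by_cases hb₁ : b = j₁ <;>
      simp_all [A, C, mul_apply, Fin.sum_univ_two, Ne.symm h]
  have hCA : 1 + C * A = !![u j₁, v j₁; u j₂, v j₂] := by
    ext a b
    fin_cases a <;> fin_cases b <;> simp [A, C, h, Ne.symm h]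
  rw [hAC, det_one_add_mul_comm, hCA, det_fin_two_of]
  ring

theorem submatrix_updateCol_of_injective {l m n o α : Type*} [DecidableEq n] [DecidableEq o]
    (M : Matrix m n α) (r : l → m) {f : o → n} (hf : Function.Injective f) (j : o) (c : m → α) :
    (M.updateCol (f j) c).submatrix r f = (M.submatrix r f).updateCol j (c ∘ r) := by
  ext a b
  simp [updateCol_apply, hf.eq_iff]

theorem mulVec_transpose_adjugate {n : Type*} [Fintype n] [DecidableEq n] (B : Matrix n n R)
    (i : n) :
    B *ᵥ (adjugate B)ᵀ i = Pi.single i B.det := by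
  ext a
  simp [mulVec, dotProduct, ← mul_apply, mul_adjugate, Pi.single_apply, one_apply, eq_comm]

theorem det_mul_adjugate_mul_sub_adjugate_mul {n : ℕ} (B : Matrix (Fin (n + 2)) (Fin (n + 2)) R)
    (i₂ j₂ : Fin (n + 2)) (i₁ j₁ : Fin (n + 1)) :
    B.det * (adjugate B (j₂.succAbove j₁) (i₂.succAbove i₁) * adjugate B j₂ i₂
        - adjugate B j₂ (i₂.succAbove i₁) * adjugate B (j₂.succAbove j₁) i₂)
      = (-1) ^ (i₂ + j₂ + i₁ + j₁ : ℕ) * B.det ^ 2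
        * ((B.submatrix i₂.succAbove j₂.succAbove).submatrix i₁.succAbove j₁.succAbove).det := by
  have hprod : B * (((1 : Matrix _ _ R).updateCol (j₂.succAbove j₁)
        ((adjugate B)ᵀ (i₂.succAbove i₁))).updateCol j₂ ((adjugate B)ᵀ i₂))
      = (B.updateCol (j₂.succAbove j₁) (Pi.single (i₂.succAbove i₁) B.det)).updateCol j₂
          (Pi.single i₂ B.det) := by
    rw [mul_updateCol, mul_updateCol, mul_one, mulVec_transpose_adjugate,
      mulVec_transpose_adjugate]
  have hcol : Pi.single (i₂.succAbove i₁) B.det ∘ i₂.succAbove = Pi.single i₁ B.det := by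
    funext k
    simp [Pi.single_apply, Fin.succAbove_right_injective.eq_iff]
  have h := congrArg det hprod
  rw [det_mul, det_one_updateCol_updateCol (Fin.succAbove_ne j₂ j₁), det_updateCol_single,
    submatrix_updateCol_of_injective _ _ Fin.succAbove_right_injective, hcol,
    det_updateCol_single] at h
  simp only [transpose_apply] at h
  rw [h]
  ring

theorem adjugate_mul_sub_adjugate_mul {n : ℕ} (B : Matrix (Fin (n + 2)) (Fin (n + 2)) R)
    (i₂ j₂ : Fin (n + 2)) (i₁ j₁ : Fin (n + 1)) :
    adjugate B (j₂.succAbove j₁) (i₂.succAbove i₁) * adjugate B j₂ i₂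
        - adjugate B j₂ (i₂.succAbove i₁) * adjugate B (j₂.succAbove j₁) i₂
      = (-1) ^ (i₂ + j₂ + i₁ + j₁ : ℕ) * B.det
        * ((B.submatrix i₂.succAbove j₂.succAbove).submatrix i₁.succAbove j₁.succAbove).det := by
  let X := mvPolynomialX (Fin (n + 2)) (Fin (n + 2)) ℤ
  suffices hX : adjugate X (j₂.succAbove j₁) (i₂.succAbove i₁) * adjugate X j₂ i₂
        - adjugate X j₂ (i₂.succAbove i₁) * adjugate X (j₂.succAbove j₁) i₂
      = (-1) ^ (i₂ + j₂ + i₁ + j₁ : ℕ) * X.det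
        * ((X.submatrix i₂.succAbove j₂.succAbove).submatrix i₁.succAbove j₁.succAbove).det by
    let f := MvPolynomial.aeval (R := ℤ) fun p : Fin (n + 2) × Fin (n + 2) => B p.1 p.2
    have hf : X.map f = B := mvPolynomialX_mapMatrix_aeval ℤ B
    have hadj (a b) : f (adjugate X a b) = adjugate B a b := by
      rw [← hf, ← AlgHom.mapMatrix_apply, ← AlgHom.map_adjugate]; rfl
    have := congrArg f hX
    simpa only [map_sub, map_mul, map_pow, map_neg, map_one, hadj, AlgHom.map_det,
      AlgHom.mapMatrix_apply, ← submatrix_map, hf] using this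
  apply mul_left_cancel₀ (det_mvPolynomialX_ne_zero (Fin (n + 2)) ℤ)
  rw [det_mul_adjugate_mul_sub_adjugate_mul]
  ring

end Matrix

/-- Desnanot–Jacobi identity. For an `(n+2) × (n+2)` matrix `B` over a
commutative ring and indices `i₁ < i₂`, `j₁ < j₂`, the minor obtained by deleting rows
`i₁, i₂` and columns `j₁, j₂`, times `det B`, equals
`B_{i₁,j₁} B_{i₂,j₂} − B_{i₁,j₂} B_{i₂,j₁}`, where `B_{i,j}` is the minor deleting row
`i` and column `j`. -/
theorem stmt3 {R : Type*} [CommRing R] {n : ℕ} (B : Matrix (Fin (n+2)) (Fin (n+2)) R)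
    (i₁ i₂ j₁ j₂ : Fin (n+2)) (hi : i₁ < i₂) (hj : j₁ < j₂) :
    ((B.submatrix i₂.succAbove j₂.succAbove).submatrix
        (Fin.succAbove ⟨i₁.1, by have := i₂.isLt; have := Fin.lt_iff_val_lt_val.mp hi; omega⟩)
        (Fin.succAbove ⟨j₁.1, by have := j₂.isLt; have := Fin.lt_iff_val_lt_val.mp hj; omega⟩)).det
      * B.det
    = (B.submatrix i₁.succAbove j₁.succAbove).det * (B.submatrix i₂.succAbove j₂.succAbove).det
      - (B.submatrix i₁.succAbove j₂.succAbove).det * (B.submatrix i₂.succAbove j₁.succAbove).det := by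
  have key := adjugate_mul_sub_adjugate_mul B i₂ j₂ (i₁.castPred (Fin.ne_last_of_lt hi))
    (j₁.castPred (Fin.ne_last_of_lt hj))
  rw [Fin.succAbove_castPred_of_lt _ _ hi, Fin.succAbove_castPred_of_lt _ _ hj] at key
  -- unfolding `castPred` turns the complementary minor into the one of the statement
  simp only [adjugate_fin_succ_eq_det_submatrix, Fin.castPred, Fin.castLT] at key
  -- both products of cofactor signs equal the unit `(-1) ^ (i₁ + i₂ + j₁ + j₂)`
  refine ((isUnit_neg_one (α := R)).pow (i₁ + i₂ + j₁ + j₂ : ℕ)).mul_left_cancel ?_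
  linear_combination -key
end

section
/- (Chio pivotal condensation) Fix n ≥ 2, and let B be an n×n matrix over a commutative ring with entries b_{i,j}. Let B' be the (n−1)×(n−1) matrix whose (i,j) entry is b_{i,j}·b_{n,n} − b_{i,n}·b_{n,j}. Then det(B') = b_{n,n}^{n−2}·det(B). -/
/-!
Clearing the last column of `B` below the pivot `a = b_{n,n}` by the row operations
`rᵢ ↦ a rᵢ - b_{i,n} r_n` multiplies the determinant by `a ^ (n-1)` and leaves a block
triangular matrix with diagonal blocks `B'` and `a`, so `a * det B' = a ^ (n-1) * det B`.
Cancelling `a` is legitimate for the generic matrix over `ℤ[X_ij]`, where the pivot is a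
nonzero element of a domain, and the identity then specialises to every commutative ring.
-/

open Matrix

namespace Matrix

variable {m o R : Type*} [Fintype m] [Fintype o] [DecidableEq m] [DecidableEq o] [CommRing R]

theorem pow_card_mul_det_smul_sub_mul (A : Matrix m m R) (u : Matrix m o R) (v : Matrix o m R)
    (a : R) :
    a ^ Fintype.card o * det (a • A - u * v) =
      a ^ Fintype.card m * det (fromBlocks A u v (a • 1)) := by
  have hE : det (fromBlocks (a • 1) (-u) 0 1 : Matrix (m ⊕ o) (m ⊕ o) R) =
      a ^ Fintype.card m := by
    rw [det_fromBlocks_zero₂₁, det_smul, det_one, det_one, mul_one, mul_one]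
  have hEB : fromBlocks (a • 1) (-u) 0 1 * fromBlocks A u v (a • 1) =
      fromBlocks (a • A - u * v) 0 v (a • 1) := by
    rw [fromBlocks_multiply]
    simp only [smul_mul, Matrix.one_mul, Matrix.neg_mul, Matrix.mul_smul, Matrix.mul_one,
      Matrix.zero_mul, zero_add, smul_neg, add_neg_cancel, ← sub_eq_add_neg]
  rw [← hE, ← det_mul, hEB, det_fromBlocks_zero₁₂, det_smul, det_one, mul_one, mul_comm]

end Matrix

section ChioCondensation

variable {R S : Type*} [CommRing R] [CommRing S] {n : ℕ}

def chioCondensation (B : Matrix (Fin (n + 1)) (Fin (n + 1)) R) : Matrix (Fin n) (Fin n) R :=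
  of fun i j => B i.castSucc j.castSucc * B (Fin.last n) (Fin.last n)
    - B i.castSucc (Fin.last n) * B (Fin.last n) j.castSucc

theorem chioCondensation_map {F : Type*} [FunLike F R S] [RingHomClass F R S]
    (B : Matrix (Fin (n + 1)) (Fin (n + 1)) R) (f : F) :
    chioCondensation (B.map f) = (chioCondensation B).map f := by
  ext i j
  simp [chioCondensation]

theorem mul_det_chioCondensation (B : Matrix (Fin (n + 1)) (Fin (n + 1)) R) :
    B (Fin.last n) (Fin.last n) * det (chioCondensation B) =
      B (Fin.last n) (Fin.last n) ^ n * det B := by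
  set a := B (Fin.last n) (Fin.last n)
  set A : Matrix (Fin n) (Fin n) R := of fun i j => B i.castSucc j.castSucc
  set u : Matrix (Fin n) (Fin 1) R := of fun i _ => B i.castSucc (Fin.last n)
  set v : Matrix (Fin 1) (Fin n) R := of fun _ j => B (Fin.last n) j.castSucc
  have hblocks : B.submatrix finSumFinEquiv finSumFinEquiv = fromBlocks A u v (a • 1) := by
    ext (i | i) (j | j) <;>
      simp only [Fin.fin_one_eq_zero, submatrix_apply, finSumFinEquiv_apply_left,
        finSumFinEquiv_apply_right, fromBlocks_apply₁₁, fromBlocks_apply₁₂, fromBlocks_apply₂₁,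
        fromBlocks_apply₂₂, of_apply, Matrix.smul_apply, one_apply_eq, smul_eq_mul, mul_one,
        A, u, v, a] <;>
      rfl
  have hB' : chioCondensation B = a • A - u * v := by
    ext i j
    simp [chioCondensation, A, u, v, a, mul_apply, mul_comm]
  have h := pow_card_mul_det_smul_sub_mul A u v a
  rwa [← hblocks, det_submatrix_equiv_self, ← hB', Fintype.card_fin, Fintype.card_fin, pow_one] at h

theorem det_chioCondensation (B : Matrix (Fin (n + 2)) (Fin (n + 2)) R) :
    det (chioCondensation B) = B (Fin.last (n + 1)) (Fin.last (n + 1)) ^ n * det B := by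
  let X := mvPolynomialX (Fin (n + 2)) (Fin (n + 2)) ℤ
  have hX : det (chioCondensation X) = X (Fin.last (n + 1)) (Fin.last (n + 1)) ^ n * det X := by
    refine mul_left_cancel₀ (MvPolynomial.X_ne_zero (Fin.last (n + 1), Fin.last (n + 1))) ?_
    exact (mul_det_chioCondensation X).trans (by rw [pow_succ', mul_assoc]; rfl)
  let φ := MvPolynomial.aeval (R := ℤ) fun p : Fin (n + 2) × Fin (n + 2) => B p.1 p.2
  have hφX : X.map φ = B := mvPolynomialX_mapMatrix_aeval ℤ B
  have hφa : φ (X (Fin.last (n + 1)) (Fin.last (n + 1))) =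
      B (Fin.last (n + 1)) (Fin.last (n + 1)) :=
    congrFun₂ hφX _ _
  have h := congrArg φ hX
  rwa [map_mul, map_pow, AlgHom.map_det, AlgHom.map_det, AlgHom.mapMatrix_apply,
    AlgHom.mapMatrix_apply, ← chioCondensation_map, hφX, hφa] at h

end ChioCondensation

/-- Chio pivotal condensation. For an `(n+2) × (n+2)` matrix `B` over a
commutative ring, if `B'` is the `(n+1) × (n+1)` matrix with entries
`b_{i,j} b_{n,n} − b_{i,n} b_{n,j}`, then `det B' = b_{n,n}^n · det B`. -/
theorem stmt4 {R : Type*} [CommRing R] {n : ℕ} (B : Matrix (Fin (n+2)) (Fin (n+2)) R)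
    (B' : Matrix (Fin (n+1)) (Fin (n+1)) R)
    (hB' : ∀ i j, B' i j =
      B i.castSucc j.castSucc * B (Fin.last (n+1)) (Fin.last (n+1))
        - B i.castSucc (Fin.last (n+1)) * B (Fin.last (n+1)) j.castSucc) :
    B'.det = B (Fin.last (n+1)) (Fin.last (n+1)) ^ n * B.det := by
  rw [show B' = chioCondensation B from Matrix.ext hB']
  exact det_chioCondensation B
end

section
/- If B is an m×n matrix with integer entries, then D_k*(B) divides D_{k+1}*(B) for all k with 2 ≤ k ≤ min{m,n} − 1, where D_k*(B) is the gcd of the determinants of all k×k submatrices of B that include the last row and the last column. -/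
open Matrix

/-- `Dk B k` is the gcd of all `k × k` minors of `B`. -/
noncomputable def Dk {m n : ℕ} (B : Matrix (Fin m) (Fin n) ℤ) (k : ℕ) : ℤ :=
  Finset.univ.gcd fun p : (Fin k ↪ Fin m) × (Fin k ↪ Fin n) =>
    (B.submatrix p.1 p.2).det

/-- `DkStar B k` is the gcd of all `k × k` minors of `B` whose row set contains the
last row and whose column set contains the last column. -/
noncomputable def DkStar {m n : ℕ} (B : Matrix (Fin (m+1)) (Fin (n+1)) ℤ) (k : ℕ) : ℤ :=
  (Finset.univ.filter fun p : (Fin k ↪ Fin (m+1)) × (Fin k ↪ Fin (n+1)) =>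
    (∃ i, p.1 i = Fin.last m) ∧ (∃ j, p.2 j = Fin.last n)).gcd
    fun p => (B.submatrix p.1 p.2).det

/-- Chio condensation of an `(n+1) × (n+1)` matrix at the entry `(n,n)`. -/
def chio {n : ℕ} (L : Matrix (Fin (n+1)) (Fin (n+1)) ℤ) : Matrix (Fin n) (Fin n) ℤ :=
  fun i j => L i.castSucc j.castSucc * L (Fin.last n) (Fin.last n)
    - L i.castSucc (Fin.last n) * L (Fin.last n) j.castSucc

/-- gcd of the entries of the last row. -/
def lastRowGcd {n : ℕ} (L : Matrix (Fin (n+1)) (Fin (n+1)) ℤ) : ℤ :=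
  Finset.univ.gcd fun j => L (Fin.last n) j

/-!
Let `L` be a `(k+1) × (k+1)` minor of `B` through the last row `s` and the last column `t`. Every
`k × k` minor of `L` keeping row `s` and column `t` is a `D_k*`-minor of `B`, so `g = D_k*(B)`
divides all entries of `adj L` outside row `t` and column `s`. Pick two rows `e₀ ≠ e₁` of `L`
other than `s` (this needs `k ≥ 2`). In the `{e₀, e₁}`-block of `L * adj L = det L • 1`, the
contribution of the index `t` is a rank-one matrix and the rest is `g • H`; taking determinants,
`(det L)² = g a det L + g² b`, which forces `g ∣ det L` since `det L / g` is then a rational root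
of a monic integer polynomial.
-/

theorem Int.dvd_of_sq_eq_mul_add {g D : ℤ} (a b : ℤ) (h : D ^ 2 = g * a * D + g ^ 2 * b) :
    g ∣ D := by
  rcases eq_or_ne g 0 with rfl | hg
  · simpa using h
  obtain ⟨d, D₀, g₀, hd, hcop, rfl, rfl⟩ :=
    Int.exists_gcd_one' (Int.gcd_pos_of_ne_zero_right D hg)
  have hD₀ : D₀ ^ 2 = g₀ * (a * D₀ + g₀ * b) := by
    have hd2 : (d : ℤ) ^ 2 ≠ 0 := by positivity
    refine mul_left_cancel₀ hd2 ?_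
    linear_combination h
  have hunit : IsUnit g₀ :=
    (Int.isCoprime_iff_gcd_eq_one.mpr hcop).symm.pow_right.isUnit_of_dvd' dvd_rfl ⟨_, hD₀⟩
  exact mul_dvd_mul_right hunit.dvd _

theorem Matrix.dvd_of_mul_eq_smul_one {ι κ : Type*} [Fintype κ] [DecidableEq κ]
    [DecidableEq ι] {P : Matrix ι κ ℤ} {Q : Matrix κ ι ℤ} {D : ℤ} (hPQ : P * Q = D • 1)
    (g : ℤ) (t : κ) {e₀ e₁ : ι} (he : e₀ ≠ e₁)
    (hQ : ∀ j ≠ t, g ∣ Q j e₀ ∧ g ∣ Q j e₁) : g ∣ D := by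
  have hsplit : ∀ r i,
      (P * Q) r i = P r t * Q t i + ∑ j ∈ Finset.univ.erase t, P r j * Q j i :=
    fun r i => (Finset.add_sum_erase _ _ (Finset.mem_univ t)).symm
  have hrest : ∀ r i, (∀ j ≠ t, g ∣ Q j i) →
      g ∣ ∑ j ∈ Finset.univ.erase t, P r j * Q j i :=
    fun r i hi => Finset.dvd_sum fun j hj => (hi j (Finset.ne_of_mem_erase hj)).mul_left _
  obtain ⟨h₀₀, e00⟩ := hrest e₀ e₀ fun j hj => (hQ j hj).1
  obtain ⟨h₀₁, e01⟩ := hrest e₀ e₁ fun j hj => (hQ j hj).2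
  obtain ⟨h₁₀, e10⟩ := hrest e₁ e₀ fun j hj => (hQ j hj).1
  obtain ⟨h₁₁, e11⟩ := hrest e₁ e₁ fun j hj => (hQ j hj).2
  have d00 := hsplit e₀ e₀
  have d01 := hsplit e₀ e₁
  have d10 := hsplit e₁ e₀
  have d11 := hsplit e₁ e₁
  simp only [hPQ, smul_apply, one_apply, he, he.symm, if_true, if_false, smul_eq_mul, mul_one,
    mul_zero, e00, e01, e10, e11] at d00 d01 d10 d11
  refine Int.dvd_of_sq_eq_mul_add (h₀₀ + h₁₁) (h₀₁ * h₁₀ - h₀₀ * h₁₁) ?_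
  -- the `t`-parts `P e t * Q t i` form a rank-one matrix, whose determinant vanishes
  linear_combination (D - g * h₁₁) * d00 + P e₀ t * Q t e₀ * d11
    - P e₁ t * Q t e₀ * d01 + g * h₀₁ * d10

theorem Matrix.dvd_det_of_dvd_det_submatrix_succAbove {N : ℕ} (hN : 2 ≤ N)
    (L : Matrix (Fin (N+1)) (Fin (N+1)) ℤ) (s t : Fin (N+1)) (g : ℤ)
    (H : ∀ i ≠ s, ∀ j ≠ t, g ∣ (L.submatrix i.succAbove j.succAbove).det) :
    g ∣ L.det := by
  obtain ⟨e₀, he₀, e₁, he₁, he⟩ :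
      ∃ e₀ ∈ Finset.univ.erase s, ∃ e₁ ∈ Finset.univ.erase s, e₀ ≠ e₁ :=
    Finset.one_lt_card.mp (by rw [Finset.card_erase_of_mem (Finset.mem_univ s)]; simp; omega)
  have hadj : ∀ j ≠ t, ∀ i ≠ s, g ∣ L.adjugate j i := fun j hj i hi => by
    rw [adjugate_fin_succ_eq_det_submatrix]
    exact (H i hi j hj).mul_left _
  exact dvd_of_mul_eq_smul_one L.mul_adjugate g t he fun j hj =>
    ⟨hadj j hj e₀ (Finset.ne_of_mem_erase he₀),
      hadj j hj e₁ (Finset.ne_of_mem_erase he₁)⟩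

theorem DkStar_dvd_det_submatrix {m n : ℕ} (B : Matrix (Fin (m+1)) (Fin (n+1)) ℤ) {k : ℕ}
    {r : Fin k ↪ Fin (m+1)} {c : Fin k ↪ Fin (n+1)}
    (hr : ∃ i, r i = Fin.last m) (hc : ∃ j, c j = Fin.last n) :
    DkStar B k ∣ (B.submatrix r c).det :=
  Finset.gcd_dvd (s := Finset.univ.filter _) (f := fun p => (B.submatrix p.1 p.2).det)
    (Finset.mem_filter.mpr ⟨Finset.mem_univ (r, c), hr, hc⟩)

theorem dvd_DkStar {m n : ℕ} (B : Matrix (Fin (m+1)) (Fin (n+1)) ℤ) (k : ℕ) (a : ℤ)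
    (H : ∀ (r : Fin k ↪ Fin (m+1)) (c : Fin k ↪ Fin (n+1)),
      (∃ i, r i = Fin.last m) → (∃ j, c j = Fin.last n) → a ∣ (B.submatrix r c).det) :
    a ∣ DkStar B k :=
  Finset.dvd_gcd fun p hp => by
    obtain ⟨-, hr, hc⟩ := Finset.mem_filter.mp hp
    exact H p.1 p.2 hr hc

theorem Fin.exists_succAboveEmb_trans_eq {k : ℕ} {α : Type*} (f : Fin (k+1) ↪ α)
    {i₀ i : Fin (k+1)} (hi : i ≠ i₀) : ∃ a, (Fin.succAboveEmb i).trans f a = f i₀ := by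
  obtain ⟨a, ha⟩ := Fin.exists_succAbove_eq hi.symm
  exact ⟨a, by simp [ha]⟩

theorem stmt5_general {m n : ℕ} (B : Matrix (Fin (m+1)) (Fin (n+1)) ℤ) (k : ℕ)
    (hk1 : 2 ≤ k) :
    DkStar B k ∣ DkStar B (k+1) := by
  refine dvd_DkStar B (k+1) _ fun r c ⟨i₀, hi₀⟩ ⟨j₀, hj₀⟩ => ?_
  refine dvd_det_of_dvd_det_submatrix_succAbove hk1 _ i₀ j₀ _ fun i hi j hj => ?_
  rw [submatrix_submatrix]
  exact DkStar_dvd_det_submatrix B (r := (Fin.succAboveEmb i).trans r)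
    (c := (Fin.succAboveEmb j).trans c) (hi₀ ▸ Fin.exists_succAboveEmb_trans_eq r hi)
    (hj₀ ▸ Fin.exists_succAboveEmb_trans_eq c hj)

/-- `D_k*(B)` divides `D_{k+1}*(B)` for `2 ≤ k ≤ min{m,n} − 1`. -/
theorem stmt5 {m n : ℕ} (B : Matrix (Fin (m+1)) (Fin (n+1)) ℤ) (k : ℕ)
    (hk1 : 2 ≤ k) (hk2 : k + 1 ≤ min (m+1) (n+1)) :
    DkStar B k ∣ DkStar B (k+1) :=
  stmt5_general B k hk1
end

section
/- Fix m, n ≥ 2. If B is an m×n matrix with integer entries, then D_1(B)·D_2*(B) divides D_1*(B)·D_2(B), where D_1(B) is the gcd of all entries of B, D_2(B) is the gcd of all 2×2 minors of B, D_1*(B) = b_{m,n}, and D_2*(B) is the gcd of all 2×2 minors of B involving the last row and the last column. -/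
open Matrix

/-!
Write `g = D₁(B)`, `s = D₂*(B)`, `b = b_{m,n}`, and let `δ` be a `2 × 2` minor of `B`. The
Chio entries `c_{ij} = b_{ij} b - b_{in} b_{mj}` are `2 × 2` minors through the last row and
column, so `s` divides all of them, and `g²` divides `δ`. Expanding `b² δ` in the Chio entries
of the rows and columns of `δ`, each term is a Chio entry times a factor divisible by
`d = gcd(g b, s)`, so `s d ∣ (g b) (b δ / g)`. Since `g b ∣ b δ / g`, the cancellation
`s gcd(a, s) ∣ a c, a ∣ c ⟹ s ∣ c` gives `s ∣ b δ / g`, that is `g s ∣ b δ`.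
-/

section Cancellation

variable {α : Type*} [CommMonoidWithZero α] [GCDMonoid α]

theorem dvd_of_mul_gcd_dvd_mul {a b c : α} (hac : a ∣ c) (h : b * gcd a b ∣ a * c) :
    b ∣ c := by
  have hgcd : b * gcd a b ∣ c * gcd a b :=
    calc b * gcd a b ∣ gcd (a * c) (b * c) :=
          dvd_gcd h (mul_dvd_mul_left b ((gcd_dvd_left a b).trans hac))
      _ ∣ gcd a b * c := (gcd_mul_right' c a b).dvd
      _ = c * gcd a b := mul_comm _ _
  by_cases h0 : gcd a b = 0
  · obtain ⟨rfl, rfl⟩ := (gcd_eq_zero_iff a b).mp h0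
    exact hac
  · exact (mul_dvd_mul_iff_right h0).mp hgcd

end Cancellation

section TwoByTwo

variable {R : Type*} [CommRing R] [GCDMonoid R]

/-- `b` is the pivot, `x` a `2 × 2` block, `u` and `v` the entries of the pivot column and
pivot row facing the block, so that `x_{ij} b - u_i v_j` are its Chio entries. -/
theorem mul_dvd_pivot_mul_det_of_dvd_chio {g s b x₀₀ x₀₁ x₁₀ x₁₁ u₀ u₁ v₀ v₁ : R}
    (h₀₀ : g ∣ x₀₀) (h₀₁ : g ∣ x₀₁) (h₁₀ : g ∣ x₁₀) (h₁₁ : g ∣ x₁₁)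
    (hc₀₀ : s ∣ x₀₀ * b - u₀ * v₀) (hc₀₁ : s ∣ x₀₁ * b - u₀ * v₁)
    (hc₁₀ : s ∣ x₁₀ * b - u₁ * v₀) (hc₁₁ : s ∣ x₁₁ * b - u₁ * v₁) :
    g * s ∣ b * (x₀₀ * x₁₁ - x₀₁ * x₁₀) := by
  obtain ⟨M, hM⟩ : g * g ∣ x₀₀ * x₁₁ - x₀₁ * x₁₀ :=
    dvd_sub (mul_dvd_mul h₀₀ h₁₁) (mul_dvd_mul h₀₁ h₁₀)
  set d := gcd (g * b) s
  have hd_entry : ∀ {x}, g ∣ x → d ∣ x * b := fun hx =>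
    (gcd_dvd_left _ _).trans (mul_dvd_mul_right hx b)
  have hd_uv : ∀ {x u v}, g ∣ x → s ∣ x * b - u * v → d ∣ u * v := fun hx hc => by
    simpa using dvd_sub (hd_entry hx) ((gcd_dvd_right _ _).trans hc)
  have hexpand : (g * b) * (g * b * M)
      = (x₀₀ * b - u₀ * v₀) * (x₁₁ * b) - (x₀₁ * b - u₀ * v₁) * (x₁₀ * b)
        + (x₁₁ * b - u₁ * v₁) * (u₀ * v₀) - (x₁₀ * b - u₁ * v₀) * (u₀ * v₁) := by
    linear_combination -b ^ 2 * hM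
  have key : s * d ∣ (g * b) * (g * b * M) := by
    rw [hexpand]
    exact dvd_sub (dvd_add (dvd_sub (mul_dvd_mul hc₀₀ (hd_entry h₁₁))
      (mul_dvd_mul hc₀₁ (hd_entry h₁₀))) (mul_dvd_mul hc₁₁ (hd_uv h₀₀ hc₀₀)))
      (mul_dvd_mul hc₁₀ (hd_uv h₀₁ hc₀₁))
  have hs : s ∣ g * b * M := dvd_of_mul_gcd_dvd_mul (dvd_mul_right _ _) key
  calc g * s ∣ g * (g * b * M) := mul_dvd_mul_left g hs
    _ = b * (x₀₀ * x₁₁ - x₀₁ * x₁₀) := by rw [hM]; ring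

end TwoByTwo

theorem Dk_one_dvd {m n : ℕ} (B : Matrix (Fin m) (Fin n) ℤ) (i : Fin m) (j : Fin n) :
    Dk B 1 ∣ B i j := by
  have h : Dk B 1 ∣ (B.submatrix (Function.Embedding.oneEmbeddingEquiv.symm i)
      (Function.Embedding.oneEmbeddingEquiv.symm j)).det :=
    Finset.gcd_dvd (Finset.mem_univ (_, _))
  rwa [det_fin_one] at h

open Function.Embedding in
theorem DkStar_two_dvd {m n : ℕ} (B : Matrix (Fin (m+1)) (Fin (n+1)) ℤ) (i : Fin (m+1))
    (j : Fin (n+1)) :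
    DkStar B 2 ∣ B i j * B (Fin.last m) (Fin.last n) - B i (Fin.last n) * B (Fin.last m) j := by
  rcases eq_or_ne i (Fin.last m) with rfl | hi
  · simp [mul_comm]
  rcases eq_or_ne j (Fin.last n) with rfl | hj
  · simp
  have hmem : (embFinTwo hi, embFinTwo hj) ∈ Finset.univ.filter
      fun p : (Fin 2 ↪ Fin (m+1)) × (Fin 2 ↪ Fin (n+1)) =>
        (∃ i, p.1 i = Fin.last m) ∧ (∃ j, p.2 j = Fin.last n) :=
    Finset.mem_filter.mpr
      ⟨Finset.mem_univ _, ⟨1, embFinTwo_apply_one hi⟩, ⟨1, embFinTwo_apply_one hj⟩⟩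
  have h := Finset.gcd_dvd (f := fun p : (Fin 2 ↪ Fin (m+1)) × (Fin 2 ↪ Fin (n+1)) =>
    (B.submatrix p.1 p.2).det) hmem
  rwa [det_fin_two] at h

theorem dvd_mul_Dk_of_forall_dvd_mul_det {m n k : ℕ} (B : Matrix (Fin m) (Fin n) ℤ) {a c : ℤ}
    (h : ∀ (e : Fin k ↪ Fin m) (f : Fin k ↪ Fin n), a ∣ c * (B.submatrix e f).det) :
    a ∣ c * Dk B k :=
  (Finset.dvd_gcd fun p _ => h p.1 p.2).trans (Finset.gcd_mul_left' _ _ c).dvd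

/-- for an `m × n` integer matrix with `m, n ≥ 2`,
`D_1(B) · D_2*(B)` divides `D_1*(B) · D_2(B)`, where `D_1*(B) = b_{m,n}`. -/
theorem stmt7 {m n : ℕ} (B : Matrix (Fin (m+2)) (Fin (n+2)) ℤ) :
    Dk B 1 * DkStar B 2 ∣ B (Fin.last (m+1)) (Fin.last (n+1)) * Dk B 2 := by
  refine dvd_mul_Dk_of_forall_dvd_mul_det B fun e f => ?_
  rw [det_fin_two]
  exact mul_dvd_pivot_mul_det_of_dvd_chio (Dk_one_dvd B _ _) (Dk_one_dvd B _ _)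
    (Dk_one_dvd B _ _) (Dk_one_dvd B _ _) (DkStar_two_dvd B _ _) (DkStar_two_dvd B _ _)
    (DkStar_two_dvd B _ _) (DkStar_two_dvd B _ _)
end

section
/- With L an n×n symmetric integer matrix of rank n−1 arising from an arithmetical structure, and L' its Chio condensation at (n,n): |K(G'; d', r')| = D_{n−2}(L') divides (g_n(L))²·d_n^{n−3}·D_{n−1}(L) = (g_n(L))²·d_n^{n−3}·|K(G; d, r)|, where g_n(L) is the gcd of the last row of L and d_n = ℓ_{n,n}. -/
open Matrix

/-!
Write `p = ℓ_{n,n}` and `C = adj L`. Every `(n-2)`-minor of `L'` is the Chio condensation of the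
`(n-1)`-minor of `L` obtained by deleting one row and one column other than the last ones, so it
equals `p^{n-3}` times that minor; hence `D_{n-2}(L')` divides `p^{n-3} C_{ij}` for `i, j ≠ n`.
Since `det L = 0`, the columns of `C` lie in the kernel of `L`, so
`ℓ_{k,n} C_{n,j} = -∑_{i ≠ n} ℓ_{k,i} C_{i,j}` for every `k`; taking the gcd over `k` costs one
factor `g_n(L)` for the entries of row `n` of `C`, by symmetry also for column `n`, and a second
one for `C_{n,n}`. Finally every `(n-1)`-minor of `L` is `± C_{ij}`. Connectivity makes `p = d_n`
nonzero: row `n` of `L r = 0` reads `d_n r_n = ∑_j a_{n,j} r_j > 0`.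
-/

theorem Finset.dvd_mul_gcd_of_forall {ι : Type*} {s : Finset ι} {f : ι → ℤ} {a c : ℤ}
    (h : ∀ i ∈ s, a ∣ c * f i) : a ∣ c * s.gcd f :=
  (Finset.dvd_gcd h).trans (Finset.gcd_mul_left' s f c).dvd

theorem isUnit_Dk_zero {m n : ℕ} (B : Matrix (Fin m) (Fin n) ℤ) : IsUnit (Dk B 0) :=
  isUnit_of_dvd_one <| by
    unfold Dk
    simpa using Finset.gcd_dvd (Finset.mem_univ (⟨.ofIsEmpty, .ofIsEmpty⟩ :
      (Fin 0 ↪ Fin m) × (Fin 0 ↪ Fin n)))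

theorem Fin.exists_succAbove_comp_perm {k : ℕ} (f : Fin k ↪ Fin (k + 1)) :
    ∃ (a : Fin (k + 1)) (σ : Equiv.Perm (Fin k)), ⇑f = a.succAbove ∘ σ := by
  obtain ⟨a, ha⟩ : ∃ a, ∀ x, f x ≠ a := by
    by_contra! h
    simpa using Fintype.card_le_of_surjective f h
  choose σ hσ using fun x => Fin.exists_succAbove_eq (ha x)
  have hσinj : Function.Injective σ := fun x y hxy => f.injective <| by rw [← hσ, ← hσ, hxy]
  exact ⟨a, .ofBijective σ (Finite.injective_iff_bijective.mp hσinj), funext fun x => (hσ x).symm⟩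

theorem exists_associated_det_submatrix_adjugate {k : ℕ} (L : Matrix (Fin (k + 1)) (Fin (k + 1)) ℤ)
    (f g : Fin k ↪ Fin (k + 1)) : ∃ a b, Associated (L.submatrix f g).det (adjugate L b a) := by
  obtain ⟨a, σ, hf⟩ := Fin.exists_succAbove_comp_perm f
  obtain ⟨b, τ, hg⟩ := Fin.exists_succAbove_comp_perm g
  refine ⟨a, b, Int.associated_iff_natAbs.mpr ?_⟩
  have h := abs_det_submatrix_equiv_equiv σ τ (L.submatrix a.succAbove b.succAbove)
  rw [submatrix_submatrix, ← hf, ← hg] at h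
  rw [adjugate_fin_succ_eq_det_submatrix, Int.natAbs_mul, Int.natAbs_pow, Int.natAbs_neg,
    Int.natAbs_one, one_pow, one_mul]
  simpa [Int.natAbs_abs] using congrArg Int.natAbs h

theorem dvd_mul_Dk_of_forall_dvd_mul_adjugate {k : ℕ} (L : Matrix (Fin (k + 1)) (Fin (k + 1)) ℤ)
    {x c : ℤ} (h : ∀ a b, x ∣ c * adjugate L a b) : x ∣ c * Dk L k :=
  Finset.dvd_mul_gcd_of_forall fun ⟨f, g⟩ _ => by
    obtain ⟨a, b, hab⟩ := exists_associated_det_submatrix_adjugate L f g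
    exact (hab.mul_left c).dvd_iff_dvd_right.mpr (h b a)

theorem det_chio_mul {k : ℕ} (M : Matrix (Fin (k + 1)) (Fin (k + 1)) ℤ) :
    (chio M).det * M (Fin.last k) (Fin.last k) = M (Fin.last k) (Fin.last k) ^ k * M.det := by
  set p := M (Fin.last k) (Fin.last k)
  -- Scale rows `i < k` by `p`, then subtract `M i k` times the last row from row `i`:
  -- the last column becomes `(0, …, 0, p)`.
  let B := diagonal (Fin.lastCases 1 fun _ => p) * M
  let c : Fin (k + 1) → ℤ := Fin.lastCases 0 fun i => -M i.castSucc (Fin.last k)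
  let A := of fun i j => B i j + c i * B (Fin.last k) j
  have hAB : A.det = B.det :=
    det_eq_of_forall_row_eq_smul_add_const c (Fin.last k) (by simp [c]) fun _ _ => rfl
  have hB : B.det = p ^ k * M.det := by
    simp [B, det_diagonal, Fin.prod_univ_castSucc]
  have hA : A.det = p * (chio M).det := by
    have hcol (i : Fin k) : A i.castSucc (Fin.last k) = 0 := by
      simp [A, B, c, p, diagonal_mul, mul_comm]
    have hsub : A.submatrix (Fin.last k).succAbove (Fin.last k).succAbove = chio M := by
      ext i j
      simp [A, B, c, p, diagonal_mul, chio, sub_eq_add_neg, mul_comm]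
    rw [det_succ_column A (Fin.last k), Fin.sum_univ_castSucc, hsub,
      Finset.sum_eq_zero fun i _ => by rw [hcol, mul_zero, zero_mul]]
    simp [A, B, c, p, ← two_mul, pow_mul]
  linear_combination hA.symm.trans (hAB.trans hB)

theorem chio_submatrix_succAbove {k : ℕ} (L : Matrix (Fin (k + 2)) (Fin (k + 2)) ℤ)
    (i j : Fin (k + 1)) :
    (chio L).submatrix i.succAbove j.succAbove
      = chio (L.submatrix i.castSucc.succAbove j.castSucc.succAbove) := by
  ext a b
  simp [chio, (Fin.castSucc_lt_last _).ne]

theorem Dk_chio_dvd_pow_mul_adjugate {k : ℕ} (L : Matrix (Fin (k + 3)) (Fin (k + 3)) ℤ)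
    (hp : L (Fin.last _) (Fin.last _) ≠ 0) (i j : Fin (k + 2)) :
    Dk (chio L) (k + 1) ∣ L (Fin.last _) (Fin.last _) ^ k * adjugate L i.castSucc j.castSucc := by
  set M := L.submatrix j.castSucc.succAbove i.castSucc.succAbove
  have hMp : M (Fin.last _) (Fin.last _) = L (Fin.last _) (Fin.last _) := by
    simp [M, (Fin.castSucc_lt_last _).ne]
  have hchio : (chio M).det = L (Fin.last _) (Fin.last _) ^ k * M.det :=
    mul_right_cancel₀ hp (by rw [← hMp, det_chio_mul]; ring)
  have hdvd : Dk (chio L) (k + 1) ∣ (chio M).det := by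
    rw [← chio_submatrix_succAbove]
    exact Finset.gcd_dvd (Finset.mem_univ (Fin.succAboveEmb j, Fin.succAboveEmb i))
  rw [adjugate_fin_succ_eq_det_submatrix, mul_left_comm, ← hchio]
  exact hdvd.mul_left _

theorem dvd_mul_mul_gcd_of_mulVec_eq_zero {ι : Type*} [Fintype ι] {L : Matrix ι ι ℤ}
    {v : ι → ℤ} (hv : L *ᵥ v = 0) {x c : ℤ} (l : ι) (h : ∀ j ≠ l, x ∣ c * v j) :
    x ∣ c * v l * Finset.univ.gcd fun k => L k l := by
  classical
  refine Finset.dvd_mul_gcd_of_forall fun k _ => ?_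
  have hk : L k l * v l = -∑ j ∈ Finset.univ.erase l, L k j * v j := by
    have := congrFun hv k
    rw [mulVec, dotProduct, ← Finset.add_sum_erase _ _ (Finset.mem_univ l), Pi.zero_apply] at this
    linear_combination this
  rw [mul_assoc, mul_comm (v l), hk, mul_neg, Finset.mul_sum]
  exact (Finset.dvd_sum fun j hj => by
    rw [mul_left_comm]; exact (h j (Finset.ne_of_mem_erase hj)).mul_left _).neg_right

theorem dvd_mul_sq_gcd_mul_adjugate {ι : Type*} [Fintype ι] [DecidableEq ι] {L : Matrix ι ι ℤ}
    (hL : L.IsSymm) (hdet : L.det = 0) {x c : ℤ} (l : ι)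
    (h : ∀ i j, i ≠ l → j ≠ l → x ∣ c * adjugate L i j) (i j : ι) :
    x ∣ c * (Finset.univ.gcd fun k => L l k) ^ 2 * adjugate L i j := by
  set g := Finset.univ.gcd fun k => L l k
  have hg : (Finset.univ.gcd fun k => L k l) = g := by
    simp only [g, hL.apply]
  have hker (j : ι) : L *ᵥ (fun i => adjugate L i j) = 0 := by
    ext k
    have := congrFun (congrFun (mul_adjugate L) k) j
    rw [hdet, zero_smul] at this
    exact this
  have hadj : (adjugate L).IsSymm := by
    rw [IsSymm, adjugate_transpose, hL.eq]
  have hrow (j : ι) (hj : j ≠ l) : x ∣ c * g * adjugate L l j := by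
    have := dvd_mul_mul_gcd_of_mulVec_eq_zero (hker j) l fun i hi => h i j hi hj
    rwa [hg, mul_right_comm] at this
  have hcol (i : ι) (hi : i ≠ l) : x ∣ c * g * adjugate L i l := by
    rw [← hadj.apply]; exact hrow i hi
  have hcorner : x ∣ c * g * g * adjugate L l l := by
    have := dvd_mul_mul_gcd_of_mulVec_eq_zero (hker l) l hcol
    rwa [hg, mul_right_comm] at this
  by_cases hi : i = l <;> by_cases hj : j = l
  · rwa [hi, hj, sq, ← mul_assoc]
  · rw [hi]; exact ((hrow j hj).mul_right g).trans (Eq.dvd (by ring))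
  · rw [hj]; exact ((hcol i hi).mul_right g).trans (Eq.dvd (by ring))
  · exact ((h i j hi hj).mul_right (g ^ 2)).trans (Eq.dvd (by ring))

theorem Dk_chio_dvd {k : ℕ} (L : Matrix (Fin (k + 3)) (Fin (k + 3)) ℤ) (hL : L.IsSymm)
    (hdet : L.det = 0) (hp : L (Fin.last _) (Fin.last _) ≠ 0) :
    Dk (chio L) (k + 1)
      ∣ lastRowGcd L ^ 2 * L (Fin.last _) (Fin.last _) ^ k * Dk L (k + 2) := by
  have hstar (i j : Fin (k + 3)) (hi : i ≠ Fin.last _) (hj : j ≠ Fin.last _) :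
      Dk (chio L) (k + 1) ∣ L (Fin.last _) (Fin.last _) ^ k * adjugate L i j := by
    obtain ⟨i, rfl⟩ := Fin.exists_castSucc_eq.mpr hi
    obtain ⟨j, rfl⟩ := Fin.exists_castSucc_eq.mpr hj
    exact Dk_chio_dvd_pow_mul_adjugate L hp i j
  rw [mul_comm (lastRowGcd L ^ 2)]
  exact dvd_mul_Dk_of_forall_dvd_mul_adjugate L (dvd_mul_sq_gcd_mul_adjugate hL hdet _ hstar)

theorem pos_of_diagonal_sub_mulVec_eq_zero {V : Type*} [Fintype V] [DecidableEq V]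
    [Nontrivial V] {A : Matrix V V ℤ} {d r : V → ℤ} (hAsymm : A.IsSymm)
    (hAnonneg : ∀ i j, 0 ≤ A i j) (hconn : (SimpleGraph.fromRel fun i j => A i j ≠ 0).Connected)
    (hr : ∀ i, 0 < r i) (hstruct : (diagonal d - A) *ᵥ r = 0) (v : V) : 0 < d v := by
  obtain ⟨u, hu⟩ : ∃ u, A v u ≠ 0 := by
    obtain ⟨u, hu⟩ : ∃ u, (SimpleGraph.fromRel fun i j => A i j ≠ 0).Adj v u := by
      simpa only [SimpleGraph.IsIsolated, not_forall, not_not] using hconn.preconnected.not_isIsolated v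
    obtain ⟨-, hu | hu⟩ := SimpleGraph.fromRel_adj _ _ _ |>.mp hu
    exacts [⟨u, hu⟩, ⟨u, hAsymm.apply v u ▸ hu⟩]
  have hrow : d v * r v = (A *ᵥ r) v := by
    have := congrFun hstruct v
    rw [sub_mulVec, Pi.sub_apply, mulVec_diagonal, Pi.zero_apply] at this
    linear_combination this
  have hpos : 0 < (A *ᵥ r) v :=
    (mul_pos ((hAnonneg v u).lt_of_ne' hu) (hr u)).trans_le <|
      Finset.single_le_sum (fun j _ => mul_nonneg (hAnonneg v j) (hr j).le) (Finset.mem_univ u)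
  exact pos_of_mul_pos_left (hrow ▸ hpos) (hr v).le

theorem stmt12_general {n : ℕ} (A : Matrix (Fin (n+1)) (Fin (n+1)) ℤ)
    (d r : Fin (n+1) → ℤ)
    (hAsymm : A.IsSymm) (hAloop : ∀ i, A i i = 0) (hAnonneg : ∀ i j, 0 ≤ A i j)
    (hconn : (SimpleGraph.fromRel fun i j => A i j ≠ 0).Connected)
    (hr : ∀ i, 0 < r i)
    (hstruct : (Matrix.diagonal d - A).mulVec r = 0) :
    Dk (chio (Matrix.diagonal d - A)) (n - 1)
      ∣ (lastRowGcd (Matrix.diagonal d - A)) ^ 2 * d (Fin.last n) ^ (n - 2)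
          * Dk (Matrix.diagonal d - A) n := by
  obtain _ | _ | k := n
  · exact (isUnit_Dk_zero _).dvd
  · exact (isUnit_Dk_zero _).dvd
  set L := diagonal d - A
  have hL : L.IsSymm := (isSymm_diagonal d).sub hAsymm
  have hdet : L.det = 0 :=
    exists_mulVec_eq_zero_iff.mp ⟨r, fun h => (hr 0).ne' (congrFun h 0), hstruct⟩
  have hp : L (Fin.last _) (Fin.last _) = d (Fin.last _) := by simp [L, hAloop]
  have hd := pos_of_diagonal_sub_mulVec_eq_zero hAsymm hAnonneg hconn hr hstruct (Fin.last _)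
  simpa [hp] using Dk_chio_dvd L hL hdet (hp ▸ hd.ne')

/-- for an arithmetical structure `(d, r)` on a connected loopless graph
with `n+1 ≥ 3` vertices and `L = diag(d) − A`, the order `D_{n−1}(L')` of the critical
group after the Keyes–Reiter operation divides
`(g_n(L))² · d_n^{(n+1)−3} · D_{n}(L) = (g_n(L))² · d_n^{(n+1)−3} · |K(G; d, r)|`. -/
theorem stmt12 {n : ℕ} (hn : 2 ≤ n) (A : Matrix (Fin (n+1)) (Fin (n+1)) ℤ)
    (d r : Fin (n+1) → ℤ)
    (hAsymm : A.IsSymm) (hAloop : ∀ i, A i i = 0) (hAnonneg : ∀ i j, 0 ≤ A i j)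
    (hconn : (SimpleGraph.fromRel fun i j => A i j ≠ 0).Connected)
    (hd : ∀ i, 0 ≤ d i) (hr : ∀ i, 0 < r i)
    (hrgcd : Finset.univ.gcd r = 1)
    (hstruct : (Matrix.diagonal d - A).mulVec r = 0) :
    Dk (chio (Matrix.diagonal d - A)) (n - 1)
      ∣ (lastRowGcd (Matrix.diagonal d - A)) ^ 2 * d (Fin.last n) ^ (n - 2)
          * Dk (Matrix.diagonal d - A) n :=
  stmt12_general A d r hAsymm hAloop hAnonneg hconn hr hstruct
end

section
/- Let L be an n×n symmetric integer matrix (n ≥ 3) and L' its Chio condensation at (n,n), with invariant factors α_k = D_k(L)/D_{k−1}(L) and α'_k = D_k(L')/D_{k−1}(L'). Then α'_1 divides (g_n(L))²·α_1·α_2, where g_n(L) is the gcd of the last row of L. -/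
open Matrix

/-!
Write `c = L n n`, `f = L n ·` for the last row and `d = D₁(L')`. By symmetry
`d ∣ L i j * c - f i * f j` for all `i, j`, i.e. `c • L ≡ f fᵀ (mod d)`. For a `2 × 2` minor `M`
with rows `a, a'` this gives `c * M ≡ f a * X` together with `f a' * X ≡ 0`, `f a * Y ≡ 0` and
`f a * X + f a' * Y ≡ 0`; dividing out `gcd (f a) (f a')` turns these into `d ∣ f a * X`, so
`d ∣ c * M`. Then `f r * f s * M ≡ L r s * (c * M) ≡ 0`, and taking gcds over `M`, `r`, `s`
gives the claim.
-/

theorem dvd_of_dvd_mul_of_dvd_mul_of_isUnit_gcd {α : Type*} [CommMonoidWithZero α]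
    [GCDMonoid α] {m N a c : α} (ha : m ∣ N * a) (hc : m ∣ N * c) (hac : IsUnit (gcd a c)) :
    m ∣ N :=
  (dvd_gcd ha hc).trans ((gcd_mul_left' N a c).dvd.trans (hac.mul_right_dvd.mpr dvd_rfl))

theorem dvd_mul_of_dvd_add_of_dvd_mul {R : Type*} [CommRing R] [GCDMonoid R]
    {m a c X Y : R} (hcX : m ∣ c * X) (haY : m ∣ a * Y) (hsum : m ∣ a * X + c * Y) :
    m ∣ a * X := by
  obtain ⟨a', c', ha, hc, hunit⟩ := extract_gcd a c
  obtain ⟨k₁, hk₁⟩ := hcX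
  obtain ⟨k₂, hk₂⟩ := haY
  obtain ⟨k₃, hk₃⟩ := hsum
  refine dvd_of_dvd_mul_of_dvd_mul_of_isUnit_gcd ⟨a' * k₃ - c' * k₂, ?_⟩ ⟨a' * k₁, ?_⟩ hunit
  · linear_combination a' * hk₃ - c' * hk₂ + (c' * Y) * ha - (a' * Y) * hc
  · linear_combination a' * hk₁ + (X * c') * ha - (a' * X) * hc

theorem dvd_mul_mul_det_fin_two_of_dvd_sub_mul {R : Type*} [CommRing R] [GCDMonoid R]
    {ι κ : Type*} (A : Matrix ι κ R) (u : ι → R) (v : κ → R) {m c : R}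
    (h : ∀ i j, m ∣ A i j * c - u i * v j) (r : ι) (s : κ) (e₁ : Fin 2 → ι) (e₂ : Fin 2 → κ) :
    m ∣ u r * v s * (A.submatrix e₁ e₂).det := by
  rw [det_fin_two]
  simp only [submatrix_apply]
  set a : Fin 2 → Fin 2 → R := fun i j => A (e₁ i) (e₂ j)
  obtain ⟨k₀₀, h₀₀⟩ := h (e₁ 0) (e₂ 0)
  obtain ⟨k₀₁, h₀₁⟩ := h (e₁ 0) (e₂ 1)
  obtain ⟨k₁₀, h₁₀⟩ := h (e₁ 1) (e₂ 0)
  obtain ⟨k₁₁, h₁₁⟩ := h (e₁ 1) (e₂ 1)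
  set X := v (e₂ 0) * a 1 1 - v (e₂ 1) * a 1 0
  set Y := v (e₂ 0) * a 0 1 - v (e₂ 1) * a 0 0
  have hX : m ∣ u (e₁ 0) * X := by
    refine dvd_mul_of_dvd_add_of_dvd_mul (c := u (e₁ 1)) (Y := Y) ?_ ?_ ?_
    · exact ⟨k₁₁ * a 1 0 - k₁₀ * a 1 1, by linear_combination a 1 0 * h₁₁ - a 1 1 * h₁₀⟩
    · exact ⟨k₀₁ * a 0 0 - k₀₀ * a 0 1, by linear_combination a 0 0 * h₀₁ - a 0 1 * h₀₀⟩
    · exact ⟨k₀₁ * a 1 0 - k₀₀ * a 1 1 + k₁₁ * a 0 0 - k₁₀ * a 0 1, by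
        linear_combination a 1 0 * h₀₁ - a 1 1 * h₀₀ + a 0 0 * h₁₁ - a 0 1 * h₁₀⟩
  have hcM : m ∣ c * (a 0 0 * a 1 1 - a 0 1 * a 1 0) := by
    obtain ⟨k, hk⟩ := hX
    exact ⟨k + k₀₀ * a 1 1 - k₀₁ * a 1 0, by linear_combination hk + a 1 1 * h₀₀ - a 1 0 * h₀₁⟩
  obtain ⟨k, hk⟩ := hcM
  obtain ⟨kᵣₛ, hᵣₛ⟩ := h r s
  exact ⟨A r s * k - kᵣₛ * (a 0 0 * a 1 1 - a 0 1 * a 1 0), by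
    linear_combination A r s * hk - (a 0 0 * a 1 1 - a 0 1 * a 1 0) * hᵣₛ⟩

theorem Finset.dvd_gcd_sq_mul {ι α : Type*} [CommMonoidWithZero α] [NormalizedGCDMonoid α]
    {s : Finset ι} {f : ι → α} {m c : α} (h : ∀ i ∈ s, ∀ j ∈ s, m ∣ f i * f j * c) :
    m ∣ s.gcd f ^ 2 * c := by
  have hgcd_mul {b : α} (hb : ∀ i ∈ s, m ∣ f i * b) : m ∣ s.gcd f * b :=
    (dvd_gcd hb).trans (gcd_mul_right' s f b).dvd
  rw [sq, mul_assoc]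
  refine hgcd_mul fun i hi => ?_
  rw [mul_left_comm]
  refine hgcd_mul fun j hj => ?_
  rw [← mul_assoc, mul_comm (f j)]
  exact h i hi j hj

theorem dvd_mul_sub_mul_of_forall_dvd_chio {n : ℕ} {L : Matrix (Fin (n+1)) (Fin (n+1)) ℤ}
    (hL : L.IsSymm) {m : ℤ} (h : ∀ i j, m ∣ chio L i j) (i j : Fin (n+1)) :
    m ∣ L i j * L (Fin.last n) (Fin.last n) - L (Fin.last n) i * L (Fin.last n) j := by
  have hcol (k : Fin (n+1)) : L k (Fin.last n) = L (Fin.last n) k := hL.apply (Fin.last n) k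
  induction i using Fin.lastCases with
  | last => simp [mul_comm]
  | cast i =>
    induction j using Fin.lastCases with
    | last => simp [hcol]
    | cast j => simpa [chio, hcol] using h i j

theorem stmt13_general {n : ℕ} (L : Matrix (Fin (n+1)) (Fin (n+1)) ℤ)
    (hsymm : L.IsSymm) :
    Dk (chio L) 1 ∣ (lastRowGcd L) ^ 2 * Dk L 2 := by
  have hcongr := dvd_mul_sub_mul_of_forall_dvd_chio hsymm (Dk_one_dvd (chio L))
  refine Finset.dvd_gcd_sq_mul fun r _ s _ => ?_
  have hminor (p : (Fin 2 ↪ Fin (n+1)) × (Fin 2 ↪ Fin (n+1))) :=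
    dvd_mul_mul_det_fin_two_of_dvd_sub_mul L _ _ hcongr r s p.1 p.2
  exact (Finset.dvd_gcd fun p _ => hminor p).trans (Finset.gcd_mul_left' _ _ _).dvd

/-- for a symmetric `(n+1) × (n+1)` integer matrix `L` (with `n+1 ≥ 3`)
and its Chio condensation `L'`, the first invariant factor `α'₁ = D₁(L')` divides
`(g_n(L))² · α₁ · α₂ = (g_n(L))² · D₂(L)`. -/
theorem stmt13 {n : ℕ} (hn : 2 ≤ n) (L : Matrix (Fin (n+1)) (Fin (n+1)) ℤ)
    (hsymm : L.IsSymm) :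
    Dk (chio L) 1 ∣ (lastRowGcd L) ^ 2 * Dk L 2 :=
  stmt13_general L hsymm
end

section
/- Let L be an n×n symmetric integer matrix (n ≥ 3) and L' its Chio condensation at (n,n). Then α_1·α_2 = D_2(L) divides α'_1 = D_1(L'). -/
/-! Every entry `ℓ_{i,j} ℓ_{n,n} - ℓ_{i,n} ℓ_{n,j}` of the Chio condensation is the `2 × 2` minor
of `L` on rows `{i, n}` and columns `{j, n}`, so `D₂(L)` divides all of them. -/

open Matrix

theorem Dk_dvd_det_submatrix {m n k : ℕ} (B : Matrix (Fin m) (Fin n) ℤ)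
    (r : Fin k ↪ Fin m) (c : Fin k ↪ Fin n) : Dk B k ∣ (B.submatrix r c).det :=
  Finset.gcd_dvd (f := fun p : (Fin k ↪ Fin m) × (Fin k ↪ Fin n) => (B.submatrix p.1 p.2).det)
    (Finset.mem_univ (r, c))

theorem dvd_Dk_one {m n : ℕ} {B : Matrix (Fin m) (Fin n) ℤ} {d : ℤ}
    (h : ∀ i j, d ∣ B i j) : d ∣ Dk B 1 :=
  Finset.dvd_gcd fun p _ => by
    rw [det_fin_one]
    exact h _ _

def Fin.castSuccLastEmb {n : ℕ} (i : Fin n) : Fin 2 ↪ Fin (n + 1) :=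
  ⟨![i.castSucc, Fin.last n], by
    intro a b hab
    fin_cases a <;> fin_cases b <;> simp_all [Fin.castSucc_ne_last, (Fin.castSucc_ne_last i).symm]⟩

theorem chio_apply_eq_det_submatrix {n : ℕ} (L : Matrix (Fin (n + 1)) (Fin (n + 1)) ℤ)
    (i j : Fin n) :
    chio L i j = (L.submatrix i.castSuccLastEmb j.castSuccLastEmb).det := by
  rw [det_fin_two]
  rfl

theorem stmt15_general {n : ℕ} (L : Matrix (Fin (n+1)) (Fin (n+1)) ℤ) :
    Dk L 2 ∣ Dk (chio L) 1 :=
  dvd_Dk_one fun i j => chio_apply_eq_det_submatrix L i j ▸ Dk_dvd_det_submatrix L _ _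

/-- for a symmetric `(n+1) × (n+1)` integer matrix `L` (with `n+1 ≥ 3`)
and its Chio condensation `L'`, `α₁ · α₂ = D₂(L)` divides `α'₁ = D₁(L')`. -/
theorem stmt15 {n : ℕ} (hn : 2 ≤ n) (L : Matrix (Fin (n+1)) (Fin (n+1)) ℤ)
    (hsymm : L.IsSymm) :
    Dk L 2 ∣ Dk (chio L) 1 :=
  stmt15_general L
end
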